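/- The dagger closure is idempotent: for any submodule N of an A-module M, (N^v_M)^v_M = N^v_M. -/

import Mathlib

open TensorProduct

/-- Dagger closure of a subset `S` of an `A`-module `M` with respect to a
normalized valuation `v : A → ℝ ∪ {∞}`. -/
def daggerCl {A M : Type*} [CommRing A] [AddCommGroup M] [Module A M]
    (v : A → WithTop ℝ) (S : Set M) : Set M :=
  {x | ∀ ε : ℝ, 0 < ε → ∃ a : A, v a < (ε : WithTop ℝ) ∧ a • x ∈ S}

section DaggerClosure

variable {A M : Type*} [CommRing A] [AddCommGroup M] [Module A M] (v : A → WithTop ℝ)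

theorem daggerCl_daggerCl_subset (hmul : ∀ a b : A, v (a * b) ≤ v a + v b) (S : Set M) :
    daggerCl v (daggerCl v S) ⊆ daggerCl v S := by
  intro x hx ε hε
  obtain ⟨a, hva, hax⟩ := hx (ε / 2) (half_pos hε)
  obtain ⟨b, hvb, hbax⟩ := hax (ε / 2) (half_pos hε)
  refine ⟨b * a, ?_, by rwa [mul_smul]⟩
  calc v (b * a) ≤ v b + v a := hmul b a
    _ < ((ε / 2 : ℝ) : WithTop ℝ) + ((ε / 2 : ℝ) : WithTop ℝ) :=
        WithTop.add_lt_add_of_lt_of_le hva.ne_top hvb hva.le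
    _ = ε := by rw [← WithTop.coe_add, add_halves]

theorem coe_subset_daggerCl_of_nonempty {N : Submodule A M} (h : (daggerCl v (N : Set M)).Nonempty) :
    (N : Set M) ⊆ daggerCl v N := by
  obtain ⟨x, hx⟩ := h
  intro y hy ε hε
  obtain ⟨a, hva, -⟩ := hx ε hε
  exact ⟨a, hva, N.smul_mem a hy⟩

theorem daggerCl_subset_daggerCl_daggerCl (N : Submodule A M) :
    daggerCl v (N : Set M) ⊆ daggerCl v (daggerCl v N) := by
  intro x hx ε hε
  obtain ⟨a, hva, hax⟩ := hx ε hε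
  exact ⟨a, hva, coe_subset_daggerCl_of_nonempty v ⟨x, hx⟩ hax⟩

end DaggerClosure

theorem daggerCl_idem_general {A : Type*} [CommRing A]
    (v : A → WithTop ℝ)
    (hmul : ∀ a b : A, v (a * b) = v a + v b)
    {M : Type*} [AddCommGroup M] [Module A M] (N : Submodule A M) :
    daggerCl v (daggerCl v (N : Set M)) = daggerCl v (N : Set M) :=
  (daggerCl_daggerCl_subset v (fun a b => (hmul a b).le) _).antisymm
    (daggerCl_subset_daggerCl_daggerCl v N)

theorem daggerCl_idem {A : Type*} [CommRing A] [IsDomain A] [IsLocalRing A]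
    (v : A → WithTop ℝ)
    (hmul : ∀ a b : A, v (a * b) = v a + v b)
    (hadd : ∀ a b : A, min (v a) (v b) ≤ v (a + b))
    (hnonneg : ∀ a : A, 0 ≤ v a)
    (hinf : ∀ a : A, v a = ⊤ ↔ a = 0)
    {M : Type*} [AddCommGroup M] [Module A M] (N : Submodule A M) :
    daggerCl v (daggerCl v (N : Set M)) = daggerCl v (N : Set M) :=
  daggerCl_idem_general v hmul N
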